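/- arXiv:1307.1640 — 5 statements merged into one kernel-verified Lean document; each statement's English description precedes it below -/
import Mathlib

section
/- Let α be a Weil q^w-number (q a prime power, w an integer). Then the number field ℚ(α) is either totally real or a CM field. -/
open IntermediateField

/-- A field is totally real if every complex embedding has real image. -/
def IsTotallyRealField (K : Type*) [Field K] : Prop :=
  ∀ ι : K →+* ℂ, ∀ x : K, (ι x).im = 0

/-- A field is CM if it is totally imaginary (no real embedding) and admits an
automorphism which coincides with complex conjugation under every complex embedding. -/
def IsCMField (K : Type*) [Field K] : Prop :=
  (∀ ι : K →+* ℂ, ∃ x : K, (ι x).im ≠ 0) ∧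
    ∃ c : K ≃+* K, ∀ ι : K →+* ℂ, ∀ x : K, (starRingEnd ℂ) (ι x) = ι (c x)

/-! The Weil condition `α · conj α = q^w` with `q^w ∈ ℚ` says `conj α = q^w / α`, the same
element of `ℚ(α)` in every complex embedding. Hence complex conjugation preserves `ℚ(α)`,
and its restriction `c` satisfies `conj ∘ ι = ι ∘ c` on the generator, so on all of `ℚ(α)`,
for every embedding `ι`. If `c` is trivial every embedding is real; otherwise no embedding
is real and `c` is the CM involution. -/

open ComplexConjugate

theorem isTotallyRealField_or_isCMField_of_conj_comp {K : Type*} [Field K] (c : K ≃+* K)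
    (hc : ∀ ι : K →+* ℂ, ∀ x, conj (ι x) = ι (c x)) :
    IsTotallyRealField K ∨ IsCMField K := by
  by_cases hid : ∀ x, c x = x
  · left
    intro ι x
    rw [← Complex.conj_eq_iff_im, hc, hid]
  · right
    push Not at hid
    obtain ⟨x, hx⟩ := hid
    refine ⟨fun ι => ⟨x, fun him => hx (ι.injective ?_)⟩, c, hc⟩
    rw [← hc, Complex.conj_eq_iff_im.mpr him]

namespace IntermediateField

theorem apply_mem_adjoin_simple {F E : Type*} [Field F] [Field E] [Algebra F E] {α : E}
    (σ : E →ₐ[F] E) (h : σ α ∈ F⟮α⟯) {x : E} (hx : x ∈ F⟮α⟯) : σ x ∈ F⟮α⟯ :=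
  (adjoin_simple_le_iff.mpr h : F⟮α⟯ ≤ F⟮α⟯.comap σ) hx

def restrictConj {F : Type*} [Field F] [Algebra F ℂ] (K : IntermediateField F ℂ)
    (hK : ∀ x ∈ K, conj x ∈ K) : K ≃+* K where
  toFun x := ⟨conj x, hK x x.2⟩
  invFun x := ⟨conj x, hK x x.2⟩
  left_inv x := Subtype.ext (Complex.conj_conj (x : ℂ))
  right_inv x := Subtype.ext (Complex.conj_conj (x : ℂ))
  map_mul' x y := Subtype.ext (map_mul conj (x : ℂ) y)
  map_add' x y := Subtype.ext (map_add conj (x : ℂ) y)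

theorem ringHom_ext_adjoin_simple {E L : Type*} [Field E] [CharZero E] [Field L] [CharZero L]
    {α : E} {f g : ℚ⟮α⟯ →+* L}
    (h : f ⟨α, mem_adjoin_simple_self ℚ α⟩ = g ⟨α, mem_adjoin_simple_self ℚ α⟩) :
    f = g :=
  congrArg AlgHom.toRingHom
    (adjoin_algHom_ext ℚ (φ₁ := f.toRatAlgHom) (φ₂ := g.toRatAlgHom) fun x hx => by
      obtain rfl := Set.mem_singleton_iff.mp hx
      exact h)

theorem adjoin_simple_isTotallyRealField_or_isCMField {α : ℂ} (β : ℚ⟮α⟯)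
    (hβ : ∀ ι : ℚ⟮α⟯ →+* ℂ, conj (ι ⟨α, mem_adjoin_simple_self ℚ α⟩) = ι β) :
    IsTotallyRealField ℚ⟮α⟯ ∨ IsCMField ℚ⟮α⟯ := by
  have hconj : conj α = β := hβ ℚ⟮α⟯.val
  let c := restrictConj ℚ⟮α⟯ fun _ hx =>
    apply_mem_adjoin_simple (starRingEnd ℂ).toRatAlgHom (hconj ▸ β.2) hx
  refine isTotallyRealField_or_isCMField_of_conj_comp c fun ι x => ?_
  have hcomp : (starRingEnd ℂ).comp ι = ι.comp c := ringHom_ext_adjoin_simple <| by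
    rw [RingHom.comp_apply, hβ]
    exact congrArg ι (Subtype.ext hconj.symm)
  exact congr($hcomp x)

end IntermediateField

theorem Complex.conj_eq_div_of_sq_norm_eq {z : ℂ} {r : ℝ} (hz : z ≠ 0) (h : ‖z‖ ^ 2 = r) :
    conj z = r / z := by
  rw [eq_div_iff hz, mul_comm, Complex.mul_conj', ← Complex.ofReal_pow, h]

theorem weil_number_field_totallyReal_or_CM_general
    (α : ℂ) (hα0 : α ≠ 0)
    (p k : ℕ) (q : ℝ) (hq : q = (p : ℝ) ^ k) (w : ℤ)
    (hweil : ∀ ι : ℚ⟮α⟯ →+* ℂ,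
      (‖ι ⟨α, IntermediateField.mem_adjoin_simple_self ℚ α⟩‖) ^ 2
        = q ^ w) :
    IsTotallyRealField ℚ⟮α⟯ ∨ IsCMField ℚ⟮α⟯ := by
  set a : ℚ⟮α⟯ := ⟨α, mem_adjoin_simple_self ℚ α⟩
  have ha : a ≠ 0 := Subtype.coe_ne_coe.mp hα0
  refine adjoin_simple_isTotallyRealField_or_isCMField (((p : ℚ) ^ k) ^ w / a) fun ι => ?_
  rw [Complex.conj_eq_div_of_sq_norm_eq ((map_ne_zero ι).mpr ha) (hweil ι), hq, map_div₀]
  simp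

/-- Let `α` be a Weil `q^w`-number (`q = p^k` a prime power, `w` an
integer).  Then the number field `ℚ(α)` is either totally real or a CM field. -/
theorem weil_number_field_totallyReal_or_CM
    (α : ℂ) (hα : IsAlgebraic ℚ α) (hα0 : α ≠ 0)
    (p k : ℕ) (hp : p.Prime) (hk : 0 < k) (q : ℝ) (hq : q = (p : ℝ) ^ k) (w : ℤ)
    (hweil : ∀ ι : ℚ⟮α⟯ →+* ℂ,
      (‖ι ⟨α, IntermediateField.mem_adjoin_simple_self ℚ α⟩‖) ^ 2
        = q ^ w) :
    IsTotallyRealField ℚ⟮α⟯ ∨ IsCMField ℚ⟮α⟯ :=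
  weil_number_field_totallyReal_or_CM_general α hα0 p k q hq w hweil
end

section
/- Let Q(X) ∈ ℂ[X] be a monic polynomial of degree n with Q(0) ≠ 0, all of whose roots α satisfy |α|² = q^w for a fixed real q > 0 and integer w. Then the polynomial obtained by applying complex conjugation to the coefficients of Q equals X^n · Q(q^w/X) / Q(0). -/
/-!
Write `c = q ^ w`. Every root `α` of `Q` satisfies `conj α * α = c`, so both sides are governed by
the same product: for `z ≠ 0`,
`Q(0) · (conj Q)(z) = ∏ (-α) (z - conj α) = ∏ (c - z α) = z ^ n · Q(c / z)`,
and two polynomials agreeing at every `z ≠ 0` are equal.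
-/

open Polynomial

namespace Polynomial

variable {K : Type*} [Field K]

theorem eval_sum_range_C_coeff_mul_pow_mul_X_pow_sub {P : K[X]} {n : ℕ} (hP : P.natDegree ≤ n)
    (c : K) {z : K} (hz : z ≠ 0) :
    eval z (∑ k ∈ Finset.range (n + 1), C (P.coeff k * c ^ k) * X ^ (n - k))
      = z ^ n * P.eval (c / z) := by
  rw [eval_eq_sum_range' (Nat.lt_succ_of_le hP), eval_finsetSum, Finset.mul_sum]
  refine Finset.sum_congr rfl fun k hk => ?_
  rw [eval_mul, eval_C, eval_pow, eval_X, pow_sub₀ z hz (Finset.mem_range_succ_iff.mp hk),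
    div_pow]
  field_simp

theorem Splits.pow_natDegree_mul_eval_div {P : K[X]} (hsplit : P.Splits) (hmonic : P.Monic)
    (c : K) {z : K} (hz : z ≠ 0) :
    z ^ P.natDegree * P.eval (c / z) = (P.roots.map fun a => c - z * a).prod := by
  have hpow : z ^ P.natDegree = (P.roots.map fun _ => z).prod := by
    rw [Multiset.map_const', Multiset.prod_replicate, hsplit.natDegree_eq_card_roots]
  rw [hpow, hsplit.eval_eq_prod_roots_of_monic hmonic, ← Multiset.prod_map_mul]
  simp only [mul_sub, mul_div_cancel₀ _ hz]

theorem Splits.eval_zero_mul_eval_map {P : K[X]} (hsplit : P.Splits) (hmonic : P.Monic)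
    (σ : K →+* K) {c : K} (hroots : ∀ a ∈ P.roots, σ a * a = c) (z : K) :
    P.eval 0 * (P.map σ).eval z = (P.roots.map fun a => c - z * a).prod := by
  have hmap : (P.map σ).eval z = (P.roots.map fun a => z - σ a).prod := by
    conv_lhs => rw [hsplit.eq_prod_roots_of_monic hmonic]
    simp [Polynomial.map_multiset_prod, eval_multiset_prod]
  rw [hmap, hsplit.eval_eq_prod_roots_of_monic hmonic, ← Multiset.prod_map_mul]
  refine congrArg Multiset.prod (Multiset.map_congr rfl fun a ha => ?_)
  rw [← hroots a ha]
  ring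

theorem Splits.C_eval_zero_mul_map_eq_sum [Infinite K] {P : K[X]} (hsplit : P.Splits)
    (hmonic : P.Monic) (σ : K →+* K) {c : K} (hroots : ∀ a ∈ P.roots, σ a * a = c) :
    C (P.eval 0) * P.map σ
      = ∑ k ∈ Finset.range (P.natDegree + 1), C (P.coeff k * c ^ k) * X ^ (P.natDegree - k) := by
  refine eq_of_infinite_eval_eq _ _ ((Set.finite_singleton 0).infinite_compl.mono fun z hz => ?_)
  rw [Set.mem_ofPred_eq, eval_mul, eval_C, hsplit.eval_zero_mul_eval_map hmonic σ hroots,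
    eval_sum_range_C_coeff_mul_pow_mul_X_pow_sub le_rfl c hz,
    hsplit.pow_natDegree_mul_eval_div hmonic c hz]

end Polynomial

theorem conj_poly_eq_reverse_twist_general
    (Q : Polynomial ℂ) (n : ℕ) (hmonic : Q.Monic) (hdeg : Q.natDegree = n)
    (h0 : Q.eval 0 ≠ 0)
    (q : ℝ) (w : ℤ)
    (hroots : ∀ α ∈ Q.roots, ‖α‖ ^ 2 = q ^ w) :
    Q.map (starRingEnd ℂ)
      = C (Q.eval 0)⁻¹ *
        ∑ k ∈ Finset.range (n + 1),
          C (Q.coeff k * ((q : ℂ) ^ w) ^ k) * X ^ (n - k) := by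
  have hconj : ∀ α ∈ Q.roots, starRingEnd ℂ α * α = (q : ℂ) ^ w := fun α hα => by
    rw [Complex.conj_mul']; exact_mod_cast hroots α hα
  rw [← hdeg, ← (IsAlgClosed.splits Q).C_eval_zero_mul_map_eq_sum hmonic _ hconj, ← mul_assoc,
    ← C_mul, inv_mul_cancel₀ h0, C_1, one_mul]

/-- Let `Q ∈ ℂ[X]` be a monic polynomial of degree `n` with `Q(0) ≠ 0`,
all of whose roots `α` satisfy `|α|² = q^w` for a fixed real `q > 0` and integer `w`.
Then the polynomial obtained by applying complex conjugation to the coefficients of `Q`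
equals `X^n · Q(q^w / X) / Q(0)`, i.e.
`conj Q = Q(0)⁻¹ • ∑_{k=0}^{n} Q_k (q^w)^k X^{n-k}`. -/
theorem conj_poly_eq_reverse_twist
    (Q : Polynomial ℂ) (n : ℕ) (hmonic : Q.Monic) (hdeg : Q.natDegree = n)
    (h0 : Q.eval 0 ≠ 0)
    (q : ℝ) (hq : 0 < q) (w : ℤ)
    (hroots : ∀ α ∈ Q.roots, ‖α‖ ^ 2 = q ^ w) :
    Q.map (starRingEnd ℂ)
      = C (Q.eval 0)⁻¹ *
        ∑ k ∈ Finset.range (n + 1),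
          C (Q.coeff k * ((q : ℂ) ^ w) ^ k) * X ^ (n - k) :=
  conj_poly_eq_reverse_twist_general Q n hmonic hdeg h0 q w hroots
end

section
/- Let M be a Galois number field over ℚ and let c, c' ∈ Gal(M/ℚ) be any two complex conjugations (i.e. restrictions to M of complex conjugation under two embeddings of M into ℂ). Then the fixed field of the subgroup of Gal(M/ℚ) generated by all products c·c' of pairs of complex conjugations is either totally real or a CM field. -/
/-- `σ ∈ Gal(M/ℚ)` is a complex conjugation if it is induced by the complex conjugation
under some embedding `M → ℂ`. -/
def IsComplexConjugation (M : Type*) [Field M] [Algebra ℚ M] (σ : M ≃ₐ[ℚ] M) : Prop :=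
  ∃ ι : M →+* ℂ, ∀ x : M, (starRingEnd ℂ) (ι x) = ι (σ x)

open IntermediateField
open NumberField.ComplexEmbedding (IsConj isConj_apply_apply lift lift_algebraMap_apply)

theorem exists_isConj_of_normal {M : Type*} [Field M] [Algebra ℚ M] [Normal ℚ M]
    (ι : M →+* ℂ) : ∃ σ : M ≃ₐ[ℚ] M, IsConj ι σ := by
  let : Algebra M ℂ := ι.toAlgebra
  have : IsScalarTower ℚ M ℂ := IsScalarTower.of_algebraMap_eq' (Subsingleton.elim _ _)
  exact ⟨(starRingEnd ℂ).toRatAlgHom.restrictNormal' M,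
    (RingHom.ext <| AlgHom.restrictNormal_commutes (starRingEnd ℂ).toRatAlgHom M).symm⟩

theorem isTotallyRealField_or_isCMField_of_forall_conj {K : Type*} [Field K] (c : K ≃+* K)
    (hc : ∀ (j : K →+* ℂ) (x : K), starRingEnd ℂ (j x) = j (c x)) :
    IsTotallyRealField K ∨ IsCMField K := by
  by_cases hid : ∀ x, c x = x
  · exact .inl fun j x ↦ Complex.conj_eq_iff_im.mp (by rw [hc, hid])
  · push Not at hid
    obtain ⟨x, hx⟩ := hid
    refine .inr ⟨fun j ↦ ⟨x, fun him ↦ hx (j.injective ?_)⟩, c, hc⟩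
    rw [← hc, Complex.conj_eq_iff_im.mpr him]

section

variable {M : Type*} [Field M] [Algebra ℚ M]

theorem isComplexConjugation_iff_exists_isConj {σ : M ≃ₐ[ℚ] M} :
    IsComplexConjugation M σ ↔ ∃ ι : M →+* ℂ, IsConj ι σ := by
  simp only [IsComplexConjugation, NumberField.ComplexEmbedding.IsConj, RingHom.ext_iff]
  rfl

theorem IsComplexConjugation.mul_self {σ : M ≃ₐ[ℚ] M} (h : IsComplexConjugation M σ) :
    σ * σ = 1 := by
  obtain ⟨ι, hι⟩ := isComplexConjugation_iff_exists_isConj.mp h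
  exact AlgEquiv.ext (isConj_apply_apply hι)

theorem IsComplexConjugation.conj {σ : M ≃ₐ[ℚ] M} (h : IsComplexConjugation M σ)
    (τ : M ≃ₐ[ℚ] M) : IsComplexConjugation M (τ * σ * τ⁻¹) := by
  obtain ⟨ι, hι⟩ := isComplexConjugation_iff_exists_isConj.mp h
  simpa using isComplexConjugation_iff_exists_isConj.mpr ⟨_, hι.comp τ⁻¹⟩

variable (M) in
def complexConjugationProducts : Subgroup (M ≃ₐ[ℚ] M) :=
  Subgroup.closure {g : M ≃ₐ[ℚ] M | ∃ c c' : M ≃ₐ[ℚ] M,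
    IsComplexConjugation M c ∧ IsComplexConjugation M c' ∧ g = c * c'}

instance complexConjugationProducts_normal : (complexConjugationProducts M).Normal := by
  refine Subgroup.normalizer_eq_top_iff.mp <| top_le_iff.mp <|
    Subgroup.le_normalizer_closure_iff.mpr ?_
  rintro τ - _ ⟨c, c', hc, hc', rfl⟩
  exact Subgroup.subset_closure ⟨τ * c * τ⁻¹, τ * c' * τ⁻¹, hc.conj τ, hc'.conj τ, by group⟩

theorem IsComplexConjugation.apply_eq_of_mem_fixedField {c c' : M ≃ₐ[ℚ] M}
    (hc : IsComplexConjugation M c) (hc' : IsComplexConjugation M c')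
    {x : M} (hx : x ∈ fixedField (complexConjugationProducts M)) : c x = c' x := by
  have hfix : c (c' x) = x := hx ⟨c * c', Subgroup.subset_closure ⟨c, c', hc, hc', rfl⟩⟩
  calc c x = c (c (c' x)) := by rw [hfix]
    _ = c' x := by rw [← AlgEquiv.mul_apply, hc.mul_self, AlgEquiv.one_apply]

end

/-- Let `M` be a Galois number field over `ℚ` and let `c, c'` range over
the complex conjugations in `Gal(M/ℚ)`.  Then the fixed field of the subgroup generated by
all products `c * c'` of pairs of complex conjugations is either totally real or CM. -/
theorem fixedField_of_products_of_conjugations_totallyReal_or_CM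
    (M : Type*) [Field M] [NumberField M] [IsGalois ℚ M] :
    IsTotallyRealField
        (IntermediateField.fixedField
          (Subgroup.closure
            {g : M ≃ₐ[ℚ] M | ∃ c c' : M ≃ₐ[ℚ] M,
              IsComplexConjugation M c ∧ IsComplexConjugation M c' ∧ g = c * c'})) ∨
      IsCMField
        (IntermediateField.fixedField
          (Subgroup.closure
            {g : M ≃ₐ[ℚ] M | ∃ c c' : M ≃ₐ[ℚ] M,
              IsComplexConjugation M c ∧ IsComplexConjugation M c' ∧ g = c * c'})) := by
  let K := fixedField (complexConjugationProducts M)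
  have : Normal ℚ K := (IsGalois.of_fixedField_normal_subgroup _).to_normal
  obtain ⟨c₀, hc₀⟩ := exists_isConj_of_normal (Classical.arbitrary (M →+* ℂ))
  refine isTotallyRealField_or_isCMField_of_forall_conj (K := K)
    (c₀.restrictNormal K).toRingEquiv fun j x ↦ ?_
  obtain ⟨c, hc⟩ := exists_isConj_of_normal (lift M j)
  have hcc₀ : c x = c₀ x := IsComplexConjugation.apply_eq_of_mem_fixedField
    (isComplexConjugation_iff_exists_isConj.mpr ⟨_, hc⟩)
    (isComplexConjugation_iff_exists_isConj.mpr ⟨_, hc₀⟩) x.2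
  have hj : ∀ y : K, lift M j y = j y := lift_algebraMap_apply M j
  calc starRingEnd ℂ (j x) = lift M j (c x) := by rw [← hj, hc.eq]; rfl
    _ = lift M j (c₀.restrictNormal K x) := by
      rw [hcc₀]
      exact congrArg _ (c₀.restrictNormal_commutes K x).symm
    _ = j (c₀.restrictNormal K x) := hj _
end

section
/- Let V be a finite-dimensional complex vector space, N : V → V a nilpotent endomorphism whose kernel is one-dimensional (equivalently, N has a single Jordan block). Let (Fil^i)_{i ∈ ℤ} be a decreasing, exhaustive, separated filtration of V by subspaces such that for all i, N(Fil^i) = (range N) ∩ Fil^{i-1}. Then dim_ℂ (Fil^i / Fil^{i+1}) ≤ 1 for every i. -/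
/-!
Since `N` maps `Fil (i + 1)` onto `range N ⊓ Fil i`, the graded piece `Fil i / Fil (i + 1)` has
dimension at most `dim Fil i - dim (range N ⊓ Fil i)`, the dimension of the image of `Fil i` in
`V ⧸ range N`; and `V ⧸ range N` has dimension `dim (ker N) = 1`.
-/

open Module Submodule LinearMap

section

variable {K V : Type*} [DivisionRing K] [AddCommGroup V] [Module K V] [FiniteDimensional K V]

theorem Submodule.finrank_quotient_comap_subtype_add_finrank {p q : Submodule K V} (hpq : p ≤ q) :
    finrank K (q ⧸ comap q.subtype p) + finrank K p = finrank K q := by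
  rw [← (comapSubtypeEquivOfLe hpq).finrank_eq, finrank_quotient_add_finrank]

theorem LinearMap.finrank_le_finrank_range_inf_add_finrank_ker (f : V →ₗ[K] V)
    (q : Submodule K V) : finrank K q ≤ finrank K ↥(range f ⊓ q) + finrank K (ker f) := by
  have hdim := finrank_sup_add_finrank_inf_eq (range f) q
  have hsup := finrank_le (range f ⊔ q)
  have hrn := finrank_range_add_finrank_ker f
  omega

end

theorem graded_pieces_dim_le_one_general
    (V : Type*) [AddCommGroup V] [Module ℂ V] [FiniteDimensional ℂ V]
    (N : V →ₗ[ℂ] V)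
    (hker : Module.finrank ℂ (LinearMap.ker N) = 1)
    (Fil : ℤ → Submodule ℂ V)
    (hdec : ∀ i : ℤ, Fil (i + 1) ≤ Fil i)
    (htrans : ∀ i : ℤ, Submodule.map N (Fil i) = LinearMap.range N ⊓ Fil (i - 1)) :
    ∀ i : ℤ,
      Module.finrank ℂ
        (↥(Fil i) ⧸ Submodule.comap (Fil i).subtype (Fil (i + 1))) ≤ 1 := by
  intro i
  have hgr := finrank_quotient_comap_subtype_add_finrank (hdec i)
  have himage : finrank ℂ ↥(range N ⊓ Fil i) ≤ finrank ℂ (Fil (i + 1)) := by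
    have h := finrank_map_le N (Fil (i + 1))
    rwa [htrans, add_sub_cancel_right] at h
  have hcodim := N.finrank_le_finrank_range_inf_add_finrank_ker (Fil i)
  omega

/-- Let `V` be a finite-dimensional complex vector space, `N : V → V` a
nilpotent endomorphism whose kernel is one-dimensional (a single Jordan block), and
`(Fil i)_{i ∈ ℤ}` a decreasing, exhaustive, separated filtration of `V` such that
`N (Fil i) = (range N) ⊓ Fil (i-1)` for all `i`.  Then every graded piece
`Fil i / Fil (i+1)` has dimension at most `1`. -/
theorem graded_pieces_dim_le_one
    (V : Type*) [AddCommGroup V] [Module ℂ V] [FiniteDimensional ℂ V]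
    (N : V →ₗ[ℂ] V) (hN : IsNilpotent N)
    (hker : Module.finrank ℂ (LinearMap.ker N) = 1)
    (Fil : ℤ → Submodule ℂ V)
    (hdec : ∀ i : ℤ, Fil (i + 1) ≤ Fil i)
    (hexh : ∃ a : ℤ, Fil a = ⊤)
    (hsep : ∃ b : ℤ, Fil b = ⊥)
    (htrans : ∀ i : ℤ, Submodule.map N (Fil i) = LinearMap.range N ⊓ Fil (i - 1)) :
    ∀ i : ℤ,
      Module.finrank ℂ
        (↥(Fil i) ⧸ Submodule.comap (Fil i).subtype (Fil (i + 1))) ≤ 1 :=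
  graded_pieces_dim_le_one_general V N hker Fil hdec htrans
end

section
/- Let V be a finite-dimensional complex vector space with a nilpotent endomorphism N having a single Jordan block, and a decreasing exhaustive separated filtration (Fil^i) satisfying N(Fil^i) = (range N) ∩ Fil^{i-1} for all i. Let i₀ be maximal such that ker N ⊆ Fil^{i₀}. Then Fil^{i₀} = V, Fil^{i₀+1} ∩ ker N = 0, Fil^{i₀} = Fil^{i₀+1} ⊕ ker N, and for all i ≥ i₀ the map N^{i-i₀} induces an injection of Fil^i/Fil^{i+1} into Fil^{i₀}/Fil^{i₀+1}. -/
/-!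
`N` maps `Fil (i + 1)` onto `range N ⊓ Fil i`, so once `Fil i = ⊤` the next step
`Fil (i + 1)` already fills `V` up to `ker N`. Climbing from an index where `Fil` is
everything, the filtration therefore stays `⊤` as long as it contains `ker N`; this gives
`Fil i₀ = ⊤` and `Fil i₀ = Fil (i₀ + 1) ⊔ ker N`, and since `ker N` is a line that is not
contained in `Fil (i₀ + 1)`, the two meet trivially. For the graded pieces: if `x` and `N x`
lie in `Fil (j + 1)` with `j ≥ i₀`, then `N x = N y` for some `y ∈ Fil (j + 2)`, and
`x - y ∈ Fil (i₀ + 1) ⊓ ker N = 0`; induction on `i - i₀` peels off one power of `N` at a time.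
-/

open Submodule LinearMap

theorem Submodule.sup_ker_eq_top_of_map_eq_range {R M M₂ : Type*} [Ring R] [AddCommGroup M]
    [Module R M] [AddCommGroup M₂] [Module R M₂] {f : M →ₗ[R] M₂} {p : Submodule R M}
    (h : p.map f = range f) : p ⊔ ker f = ⊤ := by
  rw [← comap_map_eq, h, ← range_le_iff_comap]

section StrictFiltration

variable {R M : Type*} [Ring R] [AddCommGroup M] [Module R M] {N : M →ₗ[R] M}
  {Fil : ℤ → Submodule R M}

theorem fil_succ_sup_ker_eq_top
    (htrans : ∀ i : ℤ, (Fil i).map N = range N ⊓ Fil (i - 1)) {j : ℤ} (hj : Fil j = ⊤) :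
    Fil (j + 1) ⊔ ker N = ⊤ :=
  sup_ker_eq_top_of_map_eq_range (by rw [htrans, add_sub_cancel_right, hj, inf_top_eq])

theorem fil_eq_top_of_ker_le (hdec : ∀ i : ℤ, Fil (i + 1) ≤ Fil i)
    (htrans : ∀ i : ℤ, (Fil i).map N = range N ⊓ Fil (i - 1))
    (hexh : ∃ a : ℤ, Fil a = ⊤) {i : ℤ} (hi : ker N ≤ Fil i) : Fil i = ⊤ := by
  have hanti : Antitone Fil := antitone_int_of_succ_le hdec
  obtain ⟨a, ha⟩ := hexh
  rcases lt_or_ge i a with hia | hai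
  · exact top_le_iff.mp (ha ▸ hanti hia.le)
  induction i, hai using Int.leInduction with
  | base => exact ha
  | succ j _ ih =>
    have hj : Fil j = ⊤ := ih (hi.trans (hdec j))
    rw [← fil_succ_sup_ker_eq_top htrans hj, sup_eq_left.mpr hi]

theorem apply_mem_fil_pred (htrans : ∀ i : ℤ, (Fil i).map N = range N ⊓ Fil (i - 1))
    {i : ℤ} {x : M} (hx : x ∈ Fil i) : N x ∈ Fil (i - 1) :=
  ((htrans i).le (mem_map_of_mem hx)).2

theorem mem_fil_succ_of_apply_mem (hdec : ∀ i : ℤ, Fil (i + 1) ≤ Fil i)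
    (htrans : ∀ i : ℤ, (Fil i).map N = range N ⊓ Fil (i - 1))
    {j : ℤ} (hdisj : Disjoint (Fil j) (ker N)) {x : M} (hx : x ∈ Fil j) (hNx : N x ∈ Fil j) :
    x ∈ Fil (j + 1) := by
  have hNx' : N x ∈ (Fil (j + 1)).map N := by
    rw [htrans, add_sub_cancel_right]
    exact ⟨mem_range_self N x, hNx⟩
  obtain ⟨y, hy, hyx⟩ := hNx'
  have hxy : x - y = 0 :=
    disjoint_def.mp hdisj _ (sub_mem hx (hdec j hy)) (by rw [mem_ker, map_sub, hyx, sub_self])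
  rwa [sub_eq_zero.mp hxy]

theorem mem_fil_succ_of_pow_apply_mem (hdec : ∀ i : ℤ, Fil (i + 1) ≤ Fil i)
    (htrans : ∀ i : ℤ, (Fil i).map N = range N ⊓ Fil (i - 1))
    {i₀ : ℤ} (hdisj : Disjoint (Fil (i₀ + 1)) (ker N)) (k : ℕ) {x : M}
    (hx : x ∈ Fil (i₀ + k)) (hNx : (N ^ k) x ∈ Fil (i₀ + 1)) : x ∈ Fil (i₀ + k + 1) := by
  induction k generalizing x with
  | zero => simpa using hNx
  | succ k ih =>
    have hx' : x ∈ Fil (i₀ + k + 1) := by rwa [Nat.cast_succ, ← add_assoc] at hx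
    have hNx' : N x ∈ Fil (i₀ + k + 1) :=
      ih (by simpa using apply_mem_fil_pred htrans hx')
        (by rwa [pow_succ, Module.End.mul_apply] at hNx)
    have hdisj' : Disjoint (Fil (i₀ + k + 1)) (ker N) :=
      hdisj.mono_left (antitone_int_of_succ_le hdec (by omega))
    rw [Nat.cast_succ, ← add_assoc]
    exact mem_fil_succ_of_apply_mem hdec htrans hdisj' hx' hNx'

end StrictFiltration

theorem single_jordan_block_filtration_structure_general
    (V : Type*) [AddCommGroup V] [Module ℂ V]
    (N : V →ₗ[ℂ] V)
    (hker : Module.finrank ℂ (LinearMap.ker N) = 1)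
    (Fil : ℤ → Submodule ℂ V)
    (hdec : ∀ i : ℤ, Fil (i + 1) ≤ Fil i)
    (hexh : ∃ a : ℤ, Fil a = ⊤)
    (htrans : ∀ i : ℤ, Submodule.map N (Fil i) = LinearMap.range N ⊓ Fil (i - 1))
    (i₀ : ℤ) (hi₀ : LinearMap.ker N ≤ Fil i₀) (hi₀max : ¬ LinearMap.ker N ≤ Fil (i₀ + 1)) :
    Fil i₀ = ⊤ ∧
      Fil (i₀ + 1) ⊓ LinearMap.ker N = ⊥ ∧
      Fil (i₀ + 1) ⊔ LinearMap.ker N = Fil i₀ ∧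
      ∀ i : ℤ, i₀ ≤ i → ∀ x ∈ Fil i,
        (N ^ (i - i₀).toNat) x ∈ Fil (i₀ + 1) → x ∈ Fil (i + 1) := by
  have htop : Fil i₀ = ⊤ := fil_eq_top_of_ker_le hdec htrans hexh hi₀
  have hdisj : Disjoint (Fil (i₀ + 1)) (ker N) :=
    ((isAtom_iff_finrank_eq_one.mpr hker).not_le_iff_disjoint.mp hi₀max).symm
  refine ⟨htop, hdisj.eq_bot, htop ▸ fil_succ_sup_ker_eq_top htrans htop, ?_⟩
  intro i hi x hx hNx
  obtain ⟨k, rfl⟩ := Int.le.dest hi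
  rw [add_sub_cancel_left, Int.toNat_natCast] at hNx
  exact mem_fil_succ_of_pow_apply_mem hdec htrans hdisj k hx hNx

/-- Let `V` be a finite-dimensional complex vector space with a
nilpotent endomorphism `N` having a single Jordan block (`dim ker N = 1`), and a
decreasing, exhaustive, separated filtration `(Fil i)` with
`N (Fil i) = (range N) ⊓ Fil (i-1)` for all `i`.  Let `i₀` be maximal with
`ker N ⊆ Fil i₀`.  Then `Fil i₀ = V`, `Fil (i₀+1) ∩ ker N = 0`,
`Fil i₀ = Fil (i₀+1) ⊕ ker N`, and for all `i ≥ i₀` the map `N^(i-i₀)` induces an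
injection `Fil i / Fil (i+1) ↪ Fil i₀ / Fil (i₀+1)`. -/
theorem single_jordan_block_filtration_structure
    (V : Type*) [AddCommGroup V] [Module ℂ V] [FiniteDimensional ℂ V]
    (N : V →ₗ[ℂ] V) (hN : IsNilpotent N)
    (hker : Module.finrank ℂ (LinearMap.ker N) = 1)
    (Fil : ℤ → Submodule ℂ V)
    (hdec : ∀ i : ℤ, Fil (i + 1) ≤ Fil i)
    (hexh : ∃ a : ℤ, Fil a = ⊤)
    (hsep : ∃ b : ℤ, Fil b = ⊥)
    (htrans : ∀ i : ℤ, Submodule.map N (Fil i) = LinearMap.range N ⊓ Fil (i - 1))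
    (i₀ : ℤ) (hi₀ : LinearMap.ker N ≤ Fil i₀) (hi₀max : ¬ LinearMap.ker N ≤ Fil (i₀ + 1)) :
    Fil i₀ = ⊤ ∧
      Fil (i₀ + 1) ⊓ LinearMap.ker N = ⊥ ∧
      Fil (i₀ + 1) ⊔ LinearMap.ker N = Fil i₀ ∧
      ∀ i : ℤ, i₀ ≤ i → ∀ x ∈ Fil i,
        (N ^ (i - i₀).toNat) x ∈ Fil (i₀ + 1) → x ∈ Fil (i + 1) :=
  single_jordan_block_filtration_structure_general V N hker Fil hdec hexh htrans i₀ hi₀ hi₀max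
end
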